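/- arXiv:1909.02379 — 3 statements merged into one kernel-verified Lean document; each statement's English description precedes it below -/
import Mathlib

section
/- Let (X, ‖·‖) be a Banach space and let T : X → X be a (k, a)-enriched Kannan mapping with k ∈ [0, ∞) and a ∈ [0, 1/2). Set λ = 1/(k+1) ∈ (0, 1]. Then for every x₀ ∈ X, the Krasnoselskij iteration defined by xₙ₊₁ = (1−λ)xₙ + λT xₙ converges (strongly) to the unique fixed point p of T. -/
/-!
With `λ = 1/(k+1)` the averaged map `S = (1-λ) id + λ T` satisfies `S x - S y = λ (k (x-y) + T x - T y)`
and `x - S x = λ (x - T x)`, so the enriched Kannan condition for `T` is exactly the Kannan condition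
`d(Sx, Sy) ≤ a (d(x, Sx) + d(y, Sy))` for `S`, and `S` and `T` have the same fixed points. The
Krasnoselskij iteration of `T` is the Picard iteration of `S`. For a Kannan map with `a < 1/2` the steps
of a Picard sequence shrink geometrically with ratio `a/(1-a) < 1`, so the sequence is Cauchy; its limit
is a fixed point, and a Kannan map has at most one.
-/

open Filter Topology Function

def KannanWith {α : Type*} [MetricSpace α] (a : ℝ) (S : α → α) : Prop :=
  ∀ x y, dist (S x) (S y) ≤ a * (dist x (S x) + dist y (S y))

namespace KannanWith

variable {α : Type*} [MetricSpace α] {a : ℝ} {S : α → α}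

theorem eq_of_isFixedPt (hS : KannanWith a S) {p q : α} (hp : IsFixedPt S p)
    (hq : IsFixedPt S q) : p = q := by
  have h := hS p q
  rw [hp.eq, hq.eq, dist_self, dist_self, add_zero, mul_zero] at h
  exact dist_le_zero.mp h

theorem dist_map_map_le (hS : KannanWith a S) (ha : a < 1) (x : α) :
    dist (S x) (S (S x)) ≤ a / (1 - a) * dist x (S x) := by
  have h := hS x (S x)
  rw [div_mul_eq_mul_div, le_div_iff₀ (by linarith)]
  linarith

variable {u : ℕ → α}

theorem dist_succ_le_geometric (hS : KannanWith a S) (ha0 : 0 ≤ a) (ha : a < 1)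
    (hu : ∀ n, u (n + 1) = S (u n)) (n : ℕ) :
    dist (u n) (u (n + 1)) ≤ dist (u 0) (u 1) * (a / (1 - a)) ^ n := by
  induction n with
  | zero => simp
  | succ n ih =>
    have hr : 0 ≤ a / (1 - a) := div_nonneg ha0 (by linarith)
    calc dist (u (n + 1)) (u (n + 2))
        ≤ a / (1 - a) * dist (u n) (u (n + 1)) := by
          rw [hu (n + 1), hu n]; exact hS.dist_map_map_le ha (u n)
      _ ≤ a / (1 - a) * (dist (u 0) (u 1) * (a / (1 - a)) ^ n) := by gcongr
      _ = dist (u 0) (u 1) * (a / (1 - a)) ^ (n + 1) := by ring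

theorem cauchySeq (hS : KannanWith a S) (ha0 : 0 ≤ a) (ha : a < 1 / 2)
    (hu : ∀ n, u (n + 1) = S (u n)) : CauchySeq u := by
  have hr : a / (1 - a) < 1 := by rw [div_lt_one (by linarith)]; linarith
  exact cauchySeq_of_le_geometric _ _ hr (hS.dist_succ_le_geometric ha0 (by linarith) hu)

/-- `S` need not be continuous; the Kannan condition itself passes to the limit. -/
theorem isFixedPt_of_tendsto (hS : KannanWith a S) (ha : a < 1) (hu : ∀ n, u (n + 1) = S (u n))
    {p : α} (hp : Tendsto u atTop (𝓝 p)) : IsFixedPt S p := by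
  have hstep : Tendsto (fun n => dist (u n) (u (n + 1))) atTop (𝓝 0) := by
    simpa using hp.dist (hp.comp (tendsto_add_atTop_nat 1))
  have hle : dist p (S p) ≤ a * (0 + dist p (S p)) := by
    refine le_of_tendsto_of_tendsto' ((hp.comp (tendsto_add_atTop_nat 1)).dist tendsto_const_nhds)
      ((hstep.add tendsto_const_nhds).const_mul a) fun n => ?_
    simpa only [comp_apply, hu n] using hS (u n) p
  exact (dist_le_zero.mp (by nlinarith [dist_nonneg (x := p) (y := S p)])).symm

theorem exists_isFixedPt_tendsto [CompleteSpace α] (hS : KannanWith a S) (ha0 : 0 ≤ a)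
    (ha : a < 1 / 2) (hu : ∀ n, u (n + 1) = S (u n)) :
    ∃ p, IsFixedPt S p ∧ Tendsto u atTop (𝓝 p) := by
  obtain ⟨p, hp⟩ := cauchySeq_tendsto_of_complete (hS.cauchySeq ha0 ha hu)
  exact ⟨p, hS.isFixedPt_of_tendsto (by linarith) hu hp, hp⟩

end KannanWith

section Krasnoselskij

variable {X : Type*} [NormedAddCommGroup X] [NormedSpace ℝ X]

def krasnoselskijMap (t : ℝ) (T : X → X) (x : X) : X :=
  (1 - t) • x + t • T x

theorem sub_krasnoselskijMap (t : ℝ) (T : X → X) (x : X) :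
    x - krasnoselskijMap t T x = t • (x - T x) := by
  unfold krasnoselskijMap; module

theorem isFixedPt_krasnoselskijMap_iff {t : ℝ} (ht : t ≠ 0) {T : X → X} {x : X} :
    IsFixedPt (krasnoselskijMap t T) x ↔ IsFixedPt T x := by
  rw [IsFixedPt, IsFixedPt, eq_comm, ← sub_eq_zero, sub_krasnoselskijMap, smul_eq_zero,
    sub_eq_zero, eq_comm (a := x)]
  simp [ht]

theorem kannanWith_krasnoselskijMap {T : X → X} {k a : ℝ} (hk : k + 1 ≠ 0)
    (hT : ∀ x y : X, ‖k • (x - y) + (T x - T y)‖ ≤ a * (‖x - T x‖ + ‖y - T y‖)) :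
    KannanWith a (krasnoselskijMap (1 / (k + 1)) T) := by
  intro x y
  have hdiff : krasnoselskijMap (1 / (k + 1)) T x - krasnoselskijMap (1 / (k + 1)) T y
      = (1 / (k + 1)) • (k • (x - y) + (T x - T y)) := by
    have h1 : 1 - 1 / (k + 1) = 1 / (k + 1) * k := by field_simp; ring
    unfold krasnoselskijMap; rw [h1]; module
  simp only [dist_eq_norm, hdiff, sub_krasnoselskijMap, norm_smul]
  calc ‖1 / (k + 1)‖ * ‖k • (x - y) + (T x - T y)‖
      ≤ ‖1 / (k + 1)‖ * (a * (‖x - T x‖ + ‖y - T y‖)) := by gcongr; exact hT x y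
    _ = a * (‖1 / (k + 1)‖ * ‖x - T x‖ + ‖1 / (k + 1)‖ * ‖y - T y‖) := by ring

end Krasnoselskij

/-- For a `(k, a)`-enriched Kannan mapping `T` on a Banach space, with
`λ = 1/(k+1)`, the Krasnoselskij iteration `xₙ₊₁ = (1−λ)xₙ + λ T xₙ` converges
strongly to the unique fixed point of `T`, for every starting point `x₀`. -/
theorem enrichedKannan_krasnoselskij_tendsto
    {X : Type*} [NormedAddCommGroup X] [NormedSpace ℝ X] [CompleteSpace X]
    (T : X → X) (k a : ℝ) (hk : 0 ≤ k) (ha0 : 0 ≤ a) (ha : a < 1 / 2)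
    (hT : ∀ x y : X, ‖k • (x - y) + (T x - T y)‖ ≤ a * (‖x - T x‖ + ‖y - T y‖)) :
    ∃ p : X, T p = p ∧ (∀ q : X, T q = q → q = p) ∧
      ∀ x : ℕ → X,
        (∀ n : ℕ, x (n + 1) = (1 - 1 / (k + 1)) • x n + (1 / (k + 1)) • T (x n)) →
        Filter.Tendsto x Filter.atTop (nhds p) := by
  have hk1 : k + 1 ≠ 0 := by linarith
  have ht : 1 / (k + 1) ≠ 0 := one_div_ne_zero hk1
  set S := krasnoselskijMap (1 / (k + 1)) T
  have hS : KannanWith a S := kannanWith_krasnoselskijMap hk1 hT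
  obtain ⟨p, hp, -⟩ := hS.exists_isFixedPt_tendsto ha0 ha (u := fun n => S^[n] 0)
    fun n => iterate_succ_apply' S n 0
  refine ⟨p, (isFixedPt_krasnoselskijMap_iff ht).mp hp,
    fun q hq => hS.eq_of_isFixedPt ((isFixedPt_krasnoselskijMap_iff ht).mpr hq) hp,
    fun x hx => ?_⟩
  obtain ⟨q, hq, hxq⟩ := hS.exists_isFixedPt_tendsto ha0 ha hx
  rwa [hS.eq_of_isFixedPt hq hp] at hxq
end

section
/- Let (X, ‖·‖) be a real normed linear space, T : X → X a mapping, k ∈ (0, ∞), a ∈ [0, 1/2), and set λ = 1/(k+1) ∈ (0, 1). Then T is a (k, a)-enriched Kannan mapping (i.e., ‖k(x−y) + Tx − Ty‖ ≤ a·(‖x − Tx‖ + ‖y − Ty‖) for all x, y ∈ X) if and only if the averaged mapping T_λ(x) = (1−λ)x + λT(x) is a Kannan mapping with constant a, i.e., ‖T_λx − T_λy‖ ≤ a·(‖x − T_λx‖ + ‖y − T_λy‖) for all x, y ∈ X. -/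
/-!
With `λ = 1/(k+1)` we have `λ k = 1 - λ`, so `T_λ x - T_λ y = λ • (k • (x - y) + (T x - T y))` and
`x - T_λ x = λ • (x - T x)`. Both sides of the Kannan inequality for `T_λ` are therefore those of the
enriched Kannan inequality for `T`, scaled by the positive factor `λ`.
-/

section

variable {X : Type*} [NormedAddCommGroup X] [NormedSpace ℝ X]

def IsKannan (a : ℝ) (S : X → X) : Prop :=
  ∀ x y, ‖S x - S y‖ ≤ a * (‖x - S x‖ + ‖y - S y‖)

def IsEnrichedKannan (k a : ℝ) (T : X → X) : Prop :=
  ∀ x y, ‖k • (x - y) + (T x - T y)‖ ≤ a * (‖x - T x‖ + ‖y - T y‖)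

def averagedMap (T : X → X) (c : ℝ) (x : X) : X :=
  (1 - c) • x + c • T x

variable (T : X → X) {c : ℝ}

theorem sub_averagedMap (x : X) : x - averagedMap T c x = c • (x - T x) := by
  unfold averagedMap
  module

theorem averagedMap_sub_averagedMap {k : ℝ} (hc : c * (k + 1) = 1) (x y : X) :
    averagedMap T c x - averagedMap T c y = c • (k • (x - y) + (T x - T y)) := by
  have hck : c * k = 1 - c := by linear_combination hc
  unfold averagedMap
  rw [← hck]
  module

theorem isKannan_averagedMap_iff {k a : ℝ} (hc0 : 0 < c) (hc : c * (k + 1) = 1) :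
    IsKannan a (averagedMap T c) ↔ IsEnrichedKannan k a T := by
  refine forall₂_congr fun x y => ?_
  rw [averagedMap_sub_averagedMap T hc, sub_averagedMap, sub_averagedMap,
    norm_smul_of_nonneg hc0.le, norm_smul_of_nonneg hc0.le, norm_smul_of_nonneg hc0.le,
    ← mul_add, mul_left_comm, mul_le_mul_iff_of_pos_left hc0]

end

theorem enrichedKannan_iff_averaged_kannan_general
    {X : Type*} [NormedAddCommGroup X] [NormedSpace ℝ X]
    (T : X → X) (k a : ℝ) (hk : 0 < k) :
    (∀ x y : X, ‖k • (x - y) + (T x - T y)‖ ≤ a * (‖x - T x‖ + ‖y - T y‖)) ↔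
      (∀ x y : X,
        ‖((1 - 1 / (k + 1)) • x + (1 / (k + 1)) • T x) -
            ((1 - 1 / (k + 1)) • y + (1 / (k + 1)) • T y)‖ ≤
          a * (‖x - ((1 - 1 / (k + 1)) • x + (1 / (k + 1)) • T x)‖ +
               ‖y - ((1 - 1 / (k + 1)) • y + (1 / (k + 1)) • T y)‖)) :=
  (isKannan_averagedMap_iff T (by positivity) (by field_simp)).symm

/-- `T` is a `(k, a)`-enriched Kannan mapping iff the averaged mapping
`T_λ`, `λ = 1/(k+1)`, is a Kannan mapping with constant `a`. -/
theorem enrichedKannan_iff_averaged_kannan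
    {X : Type*} [NormedAddCommGroup X] [NormedSpace ℝ X]
    (T : X → X) (k a : ℝ) (hk : 0 < k) (ha0 : 0 ≤ a) (ha : a < 1 / 2) :
    (∀ x y : X, ‖k • (x - y) + (T x - T y)‖ ≤ a * (‖x - T x‖ + ‖y - T y‖)) ↔
      (∀ x y : X,
        ‖((1 - 1 / (k + 1)) • x + (1 / (k + 1)) • T x) -
            ((1 - 1 / (k + 1)) • y + (1 / (k + 1)) • T y)‖ ≤
          a * (‖x - ((1 - 1 / (k + 1)) • x + (1 / (k + 1)) • T x)‖ +
               ‖y - ((1 - 1 / (k + 1)) • y + (1 / (k + 1)) • T y)‖)) :=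
  enrichedKannan_iff_averaged_kannan_general T k a hk
end

section
/- Let (X, ‖·‖) be a Banach space and let T : X → X be a (k, h)-enriched Bianchini mapping with k ∈ [0, ∞) and h ∈ [0, 1). Set λ = 1/(k+1) ∈ (0, 1]. Then for every x₀ ∈ X, the Krasnoselskij iteration defined by xₙ₊₁ = (1−λ)xₙ + λT xₙ converges (strongly) to the unique fixed point p of T. -/
/-!
With `λ = 1/(k+1)` one has `1 - λ = kλ`, so the averaged map `S x = (1-λ)x + λTx` satisfies
`Sx - Sy = λ(k(x-y) + Tx - Ty)` and `x - Sx = λ(x - Tx)`: the enriched condition on `T` is exactly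
the Bianchini condition `d(Sx, Sy) ≤ h max(d(x, Sx), d(y, Sy))` on `S`, and `S` has the same fixed
points as `T`. For a Bianchini map, comparing `x` with `Sx` gives `d(Sx, S²x) ≤ h d(x, Sx)`, so
every orbit is Cauchy with geometrically decaying steps; passing to the limit in the Bianchini
condition shows that its limit is a fixed point, and two fixed points `p, q` satisfy
`d(p, q) ≤ h max(0, 0)`.
-/

open Filter Topology Function

def BianchiniWith {α : Type*} [PseudoMetricSpace α] (h : ℝ) (S : α → α) : Prop :=
  ∀ x y, dist (S x) (S y) ≤ h * max (dist x (S x)) (dist y (S y))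

namespace BianchiniWith

variable {α : Type*} [MetricSpace α] {h : ℝ} {S : α → α}

theorem dist_map_map_le (hS : BianchiniWith h S) (hh0 : 0 ≤ h) (hh : h < 1) (x : α) :
    dist (S x) (S (S x)) ≤ h * dist x (S x) := by
  have hx := hS x (S x)
  rcases max_cases (dist x (S x)) (dist (S x) (S (S x))) with ⟨hmax, _⟩ | ⟨hmax, _⟩
  · rwa [hmax] at hx
  · rw [hmax] at hx
    have hzero : dist (S x) (S (S x)) ≤ 0 := by nlinarith [dist_nonneg (x := S x) (y := S (S x))]
    exact hzero.trans (by positivity)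

theorem dist_succ_le_geometric (hS : BianchiniWith h S) (hh0 : 0 ≤ h) (hh : h < 1) {u : ℕ → α}
    (hu : ∀ n, u (n + 1) = S (u n)) (n : ℕ) :
    dist (u n) (u (n + 1)) ≤ dist (u 0) (u 1) * h ^ n := by
  induction n with
  | zero => simp
  | succ n ih =>
    calc dist (u (n + 1)) (u (n + 2)) ≤ h * dist (u n) (u (n + 1)) := by
          rw [hu (n + 1), hu n]; exact hS.dist_map_map_le hh0 hh (u n)
      _ ≤ h * (dist (u 0) (u 1) * h ^ n) := mul_le_mul_of_nonneg_left ih hh0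
      _ = dist (u 0) (u 1) * h ^ (n + 1) := by ring

theorem isFixedPt_of_tendsto (hS : BianchiniWith h S) (hh : h < 1) {u : ℕ → α}
    (hu : ∀ n, u (n + 1) = S (u n)) {p : α} (hp : Tendsto u atTop (𝓝 p)) : IsFixedPt S p := by
  have hp' : Tendsto (fun n => u (n + 1)) atTop (𝓝 p) := hp.comp (tendsto_add_atTop_nat 1)
  have hle : dist p (S p) ≤ h * max (dist p p) (dist p (S p)) :=
    le_of_tendsto_of_tendsto' (hp'.dist tendsto_const_nhds)
      (((hp.dist hp').max tendsto_const_nhds).const_mul h) fun n => hu n ▸ hS (u n) p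
  rw [dist_self, max_eq_right dist_nonneg] at hle
  have hzero : dist p (S p) ≤ 0 := by nlinarith [dist_nonneg (x := p) (y := S p)]
  exact (dist_le_zero.mp hzero).symm

theorem eq_of_isFixedPt (hS : BianchiniWith h S) {p q : α} (hp : IsFixedPt S p)
    (hq : IsFixedPt S q) : q = p := by
  have hqp := hS q p
  rw [hp, hq, dist_self, dist_self, max_self, mul_zero] at hqp
  exact dist_le_zero.mp hqp

theorem exists_isFixedPt_tendsto [CompleteSpace α] (hS : BianchiniWith h S) (hh0 : 0 ≤ h)
    (hh : h < 1) {u : ℕ → α} (hu : ∀ n, u (n + 1) = S (u n)) :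
    ∃ p, IsFixedPt S p ∧ Tendsto u atTop (𝓝 p) := by
  obtain ⟨p, hp⟩ := cauchySeq_tendsto_of_complete <|
    cauchySeq_of_le_geometric h (dist (u 0) (u 1)) hh (hS.dist_succ_le_geometric hh0 hh hu)
  exact ⟨p, hS.isFixedPt_of_tendsto hh hu hp, hp⟩

theorem exists_isFixedPt_forall_tendsto [Nonempty α] [CompleteSpace α] (hS : BianchiniWith h S)
    (hh0 : 0 ≤ h) (hh : h < 1) :
    ∃ p, IsFixedPt S p ∧ (∀ q, IsFixedPt S q → q = p) ∧
      ∀ u : ℕ → α, (∀ n, u (n + 1) = S (u n)) → Tendsto u atTop (𝓝 p) := by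
  obtain ⟨p, hp, -⟩ := hS.exists_isFixedPt_tendsto hh0 hh
    (u := fun n => S^[n] (Classical.arbitrary α)) fun n => iterate_succ_apply' S n _
  refine ⟨p, hp, fun q hq => hS.eq_of_isFixedPt hp hq, fun u hu => ?_⟩
  obtain ⟨q, hq, hlim⟩ := hS.exists_isFixedPt_tendsto hh0 hh hu
  rwa [hS.eq_of_isFixedPt hp hq] at hlim

end BianchiniWith

section Krasnoselskij

variable {X : Type*} [NormedAddCommGroup X] [NormedSpace ℝ X]

theorem sub_krasnoselskij (T : X → X) (l : ℝ) (x : X) :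
    x - ((1 - l) • x + l • T x) = l • (x - T x) := by
  match_scalars <;> ring

theorem krasnoselskij_eq_self_iff (T : X → X) {l : ℝ} (hl : l ≠ 0) (x : X) :
    (1 - l) • x + l • T x = x ↔ T x = x := by
  rw [← sub_eq_zero (b := x), ← neg_eq_zero, neg_sub, sub_krasnoselskij, smul_eq_zero,
    or_iff_right hl, sub_eq_zero, eq_comm]

theorem krasnoselskij_sub_krasnoselskij (T : X → X) {k l : ℝ} (hlk : 1 - l = l * k) (x y : X) :
    ((1 - l) • x + l • T x) - ((1 - l) • y + l • T y) =
      l • (k • (x - y) + (T x - T y)) := by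
  rw [hlk]
  module

theorem bianchiniWith_krasnoselskij {T : X → X} {k h : ℝ} (hk : 0 ≤ k)
    (hT : ∀ x y : X, ‖k • (x - y) + (T x - T y)‖ ≤ h * max ‖x - T x‖ ‖y - T y‖) :
    BianchiniWith h fun x => (1 - 1 / (k + 1)) • x + (1 / (k + 1)) • T x := by
  set l := 1 / (k + 1)
  have hl : 0 < l := by positivity
  have hlk : 1 - l = l * k := by simp only [l]; field_simp; ring
  have hstep : ∀ x : X, dist x ((1 - l) • x + l • T x) = l * ‖x - T x‖ := fun x => by
    rw [dist_eq_norm, sub_krasnoselskij, norm_smul, Real.norm_of_nonneg hl.le]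
  intro x y
  rw [dist_eq_norm, krasnoselskij_sub_krasnoselskij T hlk, norm_smul, Real.norm_of_nonneg hl.le,
    hstep, hstep, ← mul_max_of_nonneg _ _ hl.le]
  calc l * ‖k • (x - y) + (T x - T y)‖ ≤ l * (h * max ‖x - T x‖ ‖y - T y‖) :=
        mul_le_mul_of_nonneg_left (hT x y) hl.le
    _ = h * (l * max ‖x - T x‖ ‖y - T y‖) := by ring

end Krasnoselskij

/-- For a `(k, h)`-enriched Bianchini mapping `T` on a Banach space, with
`λ = 1/(k+1)`, the Krasnoselskij iteration `xₙ₊₁ = (1−λ)xₙ + λ T xₙ` converges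
strongly to the unique fixed point of `T`, for every starting point `x₀`. -/
theorem enrichedBianchini_krasnoselskij_tendsto
    {X : Type*} [NormedAddCommGroup X] [NormedSpace ℝ X] [CompleteSpace X]
    (T : X → X) (k h : ℝ) (hk : 0 ≤ k) (hh0 : 0 ≤ h) (hh : h < 1)
    (hT : ∀ x y : X, ‖k • (x - y) + (T x - T y)‖ ≤ h * max ‖x - T x‖ ‖y - T y‖) :
    ∃ p : X, T p = p ∧ (∀ q : X, T q = q → q = p) ∧
      ∀ x : ℕ → X,
        (∀ n : ℕ, x (n + 1) = (1 - 1 / (k + 1)) • x n + (1 / (k + 1)) • T (x n)) →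
        Filter.Tendsto x Filter.atTop (nhds p) := by
  have hl : 1 / (k + 1) ≠ 0 := by positivity
  obtain ⟨p, hp, huniq, htendsto⟩ :=
    (bianchiniWith_krasnoselskij hk hT).exists_isFixedPt_forall_tendsto hh0 hh
  refine ⟨p, (krasnoselskij_eq_self_iff T hl p).mp hp, fun q hq => ?_, htendsto⟩
  exact huniq q ((krasnoselskij_eq_self_iff T hl q).mpr hq)
end
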